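/- Let (g, [·,·], α) be a Hom-Lie algebra, (V, •, β) a representation, and f : g∧g → V a 2-cocycle in the Chevalley-Eilenberg complex (satisfying β∘f = f∘(α∧α)). Then g ⊕ V with bracket [(x,u),(y,v)]_f := ([x,y], x•v − y•u + f(x,y)) and twisting map α⊕β is a Hom-Lie algebra (the f-twisted semidirect product). Moreover, (g⊕V, [·,·]_0, [·,·]_f, α⊕β) is a compatible Hom-Lie algebra, where [·,·]_0 is the case f = 0. -/

import Mathlib

/-- A bilinear map, as a predicate on plain two-argument functions. -/
def IsBilin (K : Type*) {M N P : Type*} [Field K] [AddCommGroup M] [Module K M]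
    [AddCommGroup N] [Module K N] [AddCommGroup P] [Module K P]
    (b : M → N → P) : Prop :=
  (∀ x, IsLinearMap K (b x)) ∧ (∀ y, IsLinearMap K fun x => b x y)

/-- A Hom-Lie algebra structure: bilinear skew-symmetric bracket `b` and a linear
twisting map `α` satisfying multiplicativity and the Hom-Jacobi identity. -/
def IsHomLie (K : Type*) {g : Type*} [Field K] [AddCommGroup g] [Module K g]
    (b : g → g → g) (α : g → g) : Prop :=
  IsBilin K b ∧ IsLinearMap K α ∧
  (∀ x y, b x y = - b y x) ∧
  (∀ x y, α (b x y) = b (α x) (α y)) ∧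
  (∀ x y z, b (b x y) (α z) + b (b y z) (α x) + b (b z x) (α y) = 0)

/-- A compatible Hom-Lie algebra: both brackets and every linear combination of
them are Hom-Lie brackets with the same twisting map `α`. -/
def IsCompatHomLie (K : Type*) {g : Type*} [Field K] [AddCommGroup g] [Module K g]
    (b₁ b₂ : g → g → g) (α : g → g) : Prop :=
  IsHomLie K b₁ α ∧ IsHomLie K b₂ α ∧
  ∀ l m : K, IsHomLie K (fun x y => l • b₁ x y + m • b₂ x y) α

/-- A representation `(V, ρ, β)` of a Hom-Lie algebra `(g, b, α)`. -/
def IsRep (K : Type*) {g V : Type*} [Field K] [AddCommGroup g] [Module K g]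
    [AddCommGroup V] [Module K V]
    (b : g → g → g) (α : g → g) (ρ : g → V → V) (β : V → V) : Prop :=
  IsBilin K ρ ∧ IsLinearMap K β ∧
  (∀ x v, β (ρ x v) = ρ (α x) (β v)) ∧
  (∀ x y v, ρ (b x y) (β v) = ρ (α x) (ρ y v) - ρ (α y) (ρ x v))

/-! Every linear combination `l [·,·]_0 + m [·,·]_f` is itself a twisted semidirect product:
the one of the Hom-Lie algebra `(g, (l+m) [·,·], α)` with the representation `(l+m) •` and the
cocycle `m f`. So everything reduces to the twisted semidirect product being a Hom-Lie algebra,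
and there the `V`-component of the Hom-Jacobi identity is the sum of the three cyclic instances
of the representation identity and the (cyclically rewritten) cocycle condition. -/

def IsTwoCocycle (K : Type*) {g V : Type*} [Field K] [AddCommGroup g] [Module K g]
    [AddCommGroup V] [Module K V]
    (b : g → g → g) (α : g → g) (ρ : g → V → V) (β : V → V) (f : g → g → V) : Prop :=
  IsBilin K f ∧ (∀ x y, f x y = - f y x) ∧ (∀ x y, β (f x y) = f (α x) (α y)) ∧
  ∀ x y z, ρ (α x) (f y z) - ρ (α y) (f x z) + ρ (α z) (f x y)
    - f (b x y) (α z) + f (b x z) (α y) - f (b y z) (α x) = 0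

section HomLie

variable {K g V : Type*} [Field K] [AddCommGroup g] [Module K g] [AddCommGroup V] [Module K V]

def semidirectBracket (b : g → g → g) (ρ : g → V → V) (f : g → g → V) :
    g × V → g × V → g × V :=
  fun p q => (b p.1 q.1, ρ p.1 q.2 - ρ q.1 p.2 + f p.1 q.1)

namespace IsBilin

variable {M N P : Type*} [AddCommGroup M] [Module K M] [AddCommGroup N] [Module K N]
  [AddCommGroup P] [Module K P] {b : M → N → P}

theorem map_add_right (hb : IsBilin K b) (x : M) (y z : N) : b x (y + z) = b x y + b x z :=
  (hb.1 x).map_add y z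

theorem map_smul_right (hb : IsBilin K b) (c : K) (x : M) (y : N) : b x (c • y) = c • b x y :=
  (hb.1 x).map_smul c y

theorem map_add_left (hb : IsBilin K b) (x y : M) (z : N) : b (x + y) z = b x z + b y z :=
  (hb.2 z).map_add x y

theorem map_smul_left (hb : IsBilin K b) (c : K) (x : M) (y : N) : b (c • x) y = c • b x y :=
  (hb.2 y).map_smul c x

theorem map_neg_left (hb : IsBilin K b) (x : M) (y : N) : b (-x) y = - b x y :=
  ((hb.2 y).mk' _).map_neg x

theorem map_neg_right (hb : IsBilin K b) (x : M) (y : N) : b x (-y) = - b x y :=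
  ((hb.1 x).mk' _).map_neg y

theorem map_sub_right (hb : IsBilin K b) (x : M) (y z : N) : b x (y - z) = b x y - b x z :=
  ((hb.1 x).mk' _).map_sub y z

theorem smul (hb : IsBilin K b) (c : K) : IsBilin K fun x y => c • b x y :=
  ⟨fun x => ⟨fun y z => by simp only [hb.map_add_right, smul_add],
      fun k y => by simp only [hb.map_smul_right, smul_comm c k]⟩,
    fun y => ⟨fun x z => by simp only [hb.map_add_left, smul_add],
      fun k x => by simp only [hb.map_smul_left, smul_comm c k]⟩⟩

end IsBilin

variable {b : g → g → g} {α : g → g} {ρ : g → V → V} {β : V → V} {f : g → g → V}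

theorem IsHomLie.smul (h : IsHomLie K b α) (c : K) :
    IsHomLie K (fun x y => c • b x y) α := by
  obtain ⟨hb, hα, hskew, hmul, hjac⟩ := h
  refine ⟨hb.smul c, hα, fun x y => by simp only [hskew x y, smul_neg],
    fun x y => by simp only [hα.map_smul, hmul], fun x y z => ?_⟩
  simp only [hb.map_smul_left, ← smul_add, hjac, smul_zero]

theorem IsRep.smul (hrep : IsRep K b α ρ β) (c : K) :
    IsRep K (fun x y => c • b x y) α (fun x v => c • ρ x v) β := by
  obtain ⟨hρ, hβ, hβρ, hrepid⟩ := hrep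
  refine ⟨hρ.smul c, hβ, fun x v => by simp only [hβ.map_smul, hβρ], fun x y v => ?_⟩
  simp only [hρ.map_smul_left, hρ.map_smul_right, hrepid, smul_sub, smul_smul]

theorem IsTwoCocycle.smul (hrep : IsRep K b α ρ β) (hf : IsTwoCocycle K b α ρ β f) (c m : K) :
    IsTwoCocycle K (fun x y => c • b x y) α (fun x v => c • ρ x v) β (fun x y => m • f x y) := by
  obtain ⟨hρ, hβ, -⟩ := hrep
  obtain ⟨hbil, hskew, hβf, hcocycle⟩ := hf
  refine ⟨hbil.smul m, fun x y => by simp only [hskew x y, smul_neg],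
    fun x y => by simp only [hβ.map_smul, hβf], fun x y z => ?_⟩
  simp only [hρ.map_smul_right, hbil.map_smul_left]
  linear_combination (norm := module) (c * m) • hcocycle x y z

theorem IsTwoCocycle.cyclic (h : IsHomLie K b α) (hrep : IsRep K b α ρ β)
    (hf : IsTwoCocycle K b α ρ β f) (x y z : g) :
    ρ (α x) (f y z) + ρ (α y) (f z x) + ρ (α z) (f x y)
      - f (b x y) (α z) - f (b y z) (α x) - f (b z x) (α y) = 0 := by
  obtain ⟨-, -, hbskew, -⟩ := h
  obtain ⟨hbil, hskew, -, hcocycle⟩ := hf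
  rw [hskew z x, hbskew z x, hrep.1.map_neg_right, hbil.map_neg_left]
  linear_combination (norm := module) hcocycle x y z

theorem IsBilin.semidirectBracket (hb : IsBilin K b) (hρ : IsBilin K ρ) (hf : IsBilin K f) :
    IsBilin K (semidirectBracket b ρ f) := by
  refine ⟨fun p => ⟨fun q r => ?_, fun k q => ?_⟩, fun q => ⟨fun p r => ?_, fun k p => ?_⟩⟩ <;>
  · refine Prod.ext ?_ ?_
    · simp only [_root_.semidirectBracket, Prod.fst_add, Prod.smul_fst, hb.map_add_right,
        hb.map_add_left, hb.map_smul_right, hb.map_smul_left]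
    · simp only [_root_.semidirectBracket, Prod.fst_add, Prod.snd_add, Prod.smul_fst,
        Prod.smul_snd, hρ.map_add_right, hρ.map_add_left, hρ.map_smul_right, hρ.map_smul_left,
        hf.map_add_right, hf.map_add_left, hf.map_smul_right, hf.map_smul_left]
      module

theorem isHomLie_semidirectBracket (h : IsHomLie K b α) (hrep : IsRep K b α ρ β)
    (hf : IsTwoCocycle K b α ρ β f) :
    IsHomLie K (semidirectBracket b ρ f) (fun p => (α p.1, β p.2)) := by
  have hcyclic := hf.cyclic h hrep
  obtain ⟨hb, hα, hskew, hmul, hjac⟩ := h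
  obtain ⟨hρ, hβ, hβρ, hrepid⟩ := hrep
  obtain ⟨hfbil, hfskew, hβf, -⟩ := hf
  refine ⟨hb.semidirectBracket hρ hfbil, ((hα.mk' _).prodMap (hβ.mk' _)).isLinear,
    fun p q => ?_, fun p q => ?_, fun ⟨x, u⟩ ⟨y, v⟩ ⟨z, w⟩ => ?_⟩
  · refine Prod.ext (hskew p.1 q.1) ?_
    simp only [_root_.semidirectBracket, Prod.snd_neg, hfskew p.1 q.1]
    module
  · simp only [_root_.semidirectBracket, hmul, hβ.map_add, hβ.map_sub, hβρ, hβf]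
  · simp only [_root_.semidirectBracket, Prod.mk_add_mk, Prod.mk_eq_zero, hρ.map_add_right,
      hρ.map_sub_right]
    refine ⟨hjac x y z, ?_⟩
    linear_combination (norm := module) hrepid x y w + hrepid y z u + hrepid z x v
      - hcyclic x y z

end HomLie

/-- For a Hom-Lie algebra `(g,b,α)`, a representation `(V,ρ,β)` and a 2-cocycle
`f`, the `f`-twisted semidirect product on `g ⊕ V` is a Hom-Lie algebra, and
together with the untwisted (`f = 0`) semidirect product it forms a compatible
Hom-Lie algebra. -/
theorem stmt9 {K g V : Type*} [Field K] [AddCommGroup g] [Module K g]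
    [AddCommGroup V] [Module K V]
    (b : g → g → g) (α : g → g) (ρ : g → V → V) (β : V → V)
    (h : IsHomLie K b α) (hrep : IsRep K b α ρ β)
    (f : g → g → V) (hf : IsBilin K f) (hfskew : ∀ x y, f x y = - f y x)
    (hfeq : ∀ x y, β (f x y) = f (α x) (α y))
    (hcocycle : ∀ x y z,
      ρ (α x) (f y z) - ρ (α y) (f x z) + ρ (α z) (f x y)
        - f (b x y) (α z) + f (b x z) (α y) - f (b y z) (α x) = 0) :
    IsHomLie K
      (fun p q : g × V => (b p.1 q.1, ρ p.1 q.2 - ρ q.1 p.2 + f p.1 q.1))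
      (fun p => (α p.1, β p.2)) ∧
    IsCompatHomLie K
      (fun p q : g × V => (b p.1 q.1, ρ p.1 q.2 - ρ q.1 p.2))
      (fun p q : g × V => (b p.1 q.1, ρ p.1 q.2 - ρ q.1 p.2 + f p.1 q.1))
      (fun p => (α p.1, β p.2)) := by
  have hfc : IsTwoCocycle K b α ρ β f := ⟨hf, hfskew, hfeq, hcocycle⟩
  have scaled (c m : K) :=
    isHomLie_semidirectBracket (h.smul c) (hrep.smul c) (hfc.smul hrep c m)
  have twisted : IsHomLie K (semidirectBracket b ρ f) (fun p => (α p.1, β p.2)) := by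
    simpa only [one_smul] using scaled 1 1
  have untwisted : IsHomLie K (fun p q : g × V => (b p.1 q.1, ρ p.1 q.2 - ρ q.1 p.2))
      (fun p => (α p.1, β p.2)) := by
    convert scaled 1 0 using 1
    funext p q
    simp only [semidirectBracket, one_smul, zero_smul, add_zero]
  refine ⟨twisted, untwisted, twisted, fun l m => ?_⟩
  convert scaled (l + m) m using 1
  funext p q
  ext <;> simp only [semidirectBracket, Prod.smul_fst, Prod.smul_snd, Prod.fst_add, Prod.snd_add]
    <;> module
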